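/- Let X = ℕ, let a ≥ 2, and let α(x,y) = a·x + a·y. Let ≈ be the smallest equivalence relation on nonempty finite sequences over ℕ generated by permutations of entries and by replacing consecutive entries x, y with the single entry α(x,y). Then for any x, y ∈ ℕ with x, y < a, if the singleton sequences (x) and (y) are ≈-equivalent, then x = y. In particular, the natural map ι : ℕ → Z/≈ is injective on {0, 1, ..., a−1}. -/

import Mathlib

/-!
Replacing `x, y` by `a x + a y` adds `(a - 1)(x + y)` to the sum of a sequence, and permuting
does not change it, so the sum modulo `a - 1` is invariant; so is whether the sum vanishes,
since `x + y > 0` forces `a x + a y > 0`. Both are recorded by the digital root of the sum in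
base `a`, which is `x` itself on a singleton `(x)` with `x < a`.
-/

/-- One rewriting step on finite sequences: either a permutation of entries, or
the replacement of two consecutive entries `x, y` by the single entry `α x y`. -/
def TensorStep {X : Type*} (α : X → X → X) (l l' : List X) : Prop :=
  l.Perm l' ∨ ∃ (p s : List X) (x y : X),
    l = p ++ x :: y :: s ∧ l' = p ++ α x y :: s

theorem Relation.EqvGen.apply_eq {α β : Type*} {r : α → α → Prop} {f : α → β}
    (hf : ∀ a b, r a b → f a = f b) {a b : α} (h : Relation.EqvGen r a b) : f a = f b :=
  congrArg (Quot.lift f hf) (Quot.eqvGen_sound h)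

def digitalRoot (m n : ℕ) : ℕ :=
  if n = 0 then 0 else (n - 1) % m + 1

theorem digitalRoot_of_le {m n : ℕ} (h : n ≤ m) : digitalRoot m n = n := by
  unfold digitalRoot
  split_ifs with hn
  · exact hn.symm
  · rw [Nat.mod_eq_of_lt (by omega)]
    omega

theorem digitalRoot_add_mul {m n : ℕ} (hn : n ≠ 0) (k : ℕ) :
    digitalRoot m (n + m * k) = digitalRoot m n := by
  unfold digitalRoot
  rw [if_neg (by omega), if_neg hn, Nat.sub_add_comm (Nat.one_le_iff_ne_zero.2 hn),
    Nat.add_mul_mod_self_left]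

theorem TensorStep.sum_eq {a : ℕ} (ha : 0 < a) {l l' : List ℕ}
    (h : TensorStep (fun u v : ℕ => a * u + a * v) l l') :
    ∃ k ≤ l.sum, l'.sum = l.sum + (a - 1) * k := by
  rcases h with hperm | ⟨p, s, x, y, rfl, rfl⟩
  · exact ⟨0, Nat.zero_le _, by rw [hperm.sum_eq, mul_zero, add_zero]⟩
  · refine ⟨x + y, by simp only [List.sum_append, List.sum_cons]; omega, ?_⟩
    obtain ⟨b, rfl⟩ : ∃ b, a = b + 1 := ⟨a - 1, by omega⟩
    simp only [List.sum_append, List.sum_cons, Nat.add_sub_cancel]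
    ring

theorem TensorStep.digitalRoot_sum_eq {a : ℕ} (ha : 0 < a) {l l' : List ℕ}
    (h : TensorStep (fun u v : ℕ => a * u + a * v) l l') :
    digitalRoot (a - 1) l.sum = digitalRoot (a - 1) l'.sum := by
  obtain ⟨k, hk, hsum⟩ := h.sum_eq ha
  rw [hsum]
  rcases Nat.eq_zero_or_pos k with rfl | hk0
  · rw [mul_zero, add_zero]
  · exact (digitalRoot_add_mul (by omega) k).symm

theorem stmt_18_general (a : ℕ) :
    ∀ x y : ℕ, x < a → y < a →
      Relation.EqvGen (TensorStep (fun u v : ℕ => a * u + a * v)) [x] [y] →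
      x = y := by
  intro x y hx hy h
  have ha : 0 < a := by omega
  have hroot := h.apply_eq fun _ _ hstep => hstep.digitalRoot_sum_eq ha
  simpa only [List.sum_singleton, digitalRoot_of_le (by omega : x ≤ a - 1),
    digitalRoot_of_le (by omega : y ≤ a - 1)] using hroot

/-- for `α(x,y) = a·x + a·y` on `ℕ` with `a ≥ 2`, if `x, y < a`
and the singleton sequences `(x)` and `(y)` are equivalent under the generated
equivalence, then `x = y`; i.e. `ι` is injective on `{0, 1, ..., a-1}`. -/
theorem stmt_18 (a : ℕ) (ha : 2 ≤ a) :
    ∀ x y : ℕ, x < a → y < a →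
      Relation.EqvGen (TensorStep (fun u v : ℕ => a * u + a * v)) [x] [y] →
      x = y :=
  stmt_18_general a
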